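/- Let I be a finite index set and C = (a_{ij})_{i,j∈I} a symmetrizable generalized Cartan matrix: a_{ii} = 2, a_{ij} is a nonpositive integer for i ≠ j, and there exist positive integers (d_i)_{i∈I} with d_i·a_{ij} = d_j·a_{ji} for all i, j. Let ℚ(v) be the field of rational functions over ℚ in an indeterminate v, set v_i = v^{d_i}, and let [m choose t]_i denote the quantum binomial coefficient in v_i (with [m]_i = (v_i^m - v_i^{-m})/(v_i - v_i^{-1})). Let U(C) be the ℚ(v)-algebra presented by generators E_i, F_i, K_i, K_{-i} (i ∈ I) and relations: K_iK_{-i} = 1 = K_{-i}K_i, K_iK_j = K_jK_i; K_iE_j = v_i^{a_{ij}}E_jK_i, K_iF_j = v_i^{-a_{ij}}F_jK_i; (v_i - v_i^{-1})(E_iF_i - F_iE_i) = K_i - K_{-i}, and E_iF_j = F_jE_i for i ≠ j; and the quantum Serre relations Σ_{t=0}^{1-a_{ij}} (-1)^t [1-a_{ij} choose t]_i E_i^t E_j E_i^{1-a_{ij}-t} = 0 and Σ_{t=0}^{1-a_{ij}} (-1)^t [1-a_{ij} choose t]_i F_i^t F_j F_i^{1-a_{ij}-t} = 0 for i ≠ j.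 Let V be the ℚ(v)-algebra presented by generators E⁺_i, E⁻_i, K_i, K_{-i} (i ∈ I) and relations: K_iK_{-i} = 1 = K_{-i}K_i, K_iK_j = K_jK_i; K_iE⁺_j = v_i^{a_{ij}}E⁺_jK_i, K_iE⁻_j = v_i^{-a_{ij}}E⁻_jK_i; (v_i - v_i^{-1})(E⁺_iE⁻_i - E⁻_iE⁺_i) = K_i - K_{-i}; the quantum Serre relations Σ_{t=0}^{1-a_{ij}} (-1)^t [1-a_{ij} choose t]_i (E⁺_i)^t E⁺_j (E⁺_i)^{1-a_{ij}-t} = 0 and Σ_{t=0}^{1-a_{ij}} (-1)^t [1-a_{ij} choose t]_i (E⁻_i)^t E⁻_j (E⁻_i)^{1-a_{ij}-t} = 0 for i ≠ j; the mixed relations (E⁺_i)³E⁻_i - a(E⁺_i)²E⁻_iE⁺_i + aE⁺_iE⁻_i(E⁺_i)² - E⁻_i(E⁺_i)³ = 0 and (E⁻_i)³E⁺_i - a(E⁻_i)²E⁺_iE⁻_i + aE⁻_iE⁺_i(E⁻_i)² - E⁺_i(E⁻_i)³ = 0 where a = v_i² + 1 + v_i⁻²; and E⁺_iE⁻_j =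 E⁻_jE⁺_i for i ≠ j. Then there is a unique ℚ(v)-algebra isomorphism φ: U(C) → V such that φ(E_i) = E⁺_i, φ(F_i) = E⁻_i, φ(K_i) = K_i, and φ(K_{-i}) = K_{-i} for all i ∈ I. -/
import Mathlib


open FreeAlgebra

/-- Balanced quantum integer `[m] = (v^m - v^{-m})/(v - v⁻¹)`. -/
noncomputable def qint {F : Type*} [Field F] (v : F) (m : ℤ) : F :=
  (v ^ m - v ^ (-m)) / (v - v⁻¹)

/-- Quantum factorial `[m]! = ∏_{t=1}^m [t]`. -/
noncomputable def qfact {F : Type*} [Field F] (v : F) : ℕ → F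
  | 0 => 1
  | m + 1 => qfact v m * qint v (m + 1)

/-- Quantum binomial coefficient `[m choose t] = [m]!/([t]![m-t]!)`. -/
noncomputable def qbinom {F : Type*} [Field F] (v : F) (m t : ℕ) : F :=
  qfact v m / (qfact v t * qfact v (m - t))

/-- The field ℚ(v) of rational functions over ℚ. -/
abbrev Kv : Type := RatFunc ℚ

/-- The indeterminate `v` of ℚ(v). -/
noncomputable def vv : Kv := RatFunc.X

/-- Generators of the quantized enveloping algebra U(C). -/
inductive UGen (I : Type) | E : I → UGen I | F : I → UGen I | K : I → UGen I | K' : I → UGen I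

/-- Generators of the algebra V. -/
inductive VGen (I : Type) | Ep : I → VGen I | Em : I → VGen I | K : I → VGen I | K' : I → VGen I

/-- Defining relations of the quantized enveloping algebra U(C) associated to a
symmetrizable generalized Cartan matrix `a` with symmetrizers `d`. -/
inductive URel (I : Type) (a : I → I → ℤ) (d : I → ℤ) :
    FreeAlgebra Kv (UGen I) → FreeAlgebra Kv (UGen I) → Prop
  | KK' (i : I) : URel I a d (ι Kv (UGen.K i) * ι Kv (UGen.K' i)) 1
  | K'K (i : I) : URel I a d (ι Kv (UGen.K' i) * ι Kv (UGen.K i)) 1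
  | KKcomm (i j : I) : URel I a d (ι Kv (UGen.K i) * ι Kv (UGen.K j))
      (ι Kv (UGen.K j) * ι Kv (UGen.K i))
  | KE (i j : I) : URel I a d (ι Kv (UGen.K i) * ι Kv (UGen.E j))
      (((vv ^ d i) ^ a i j) • (ι Kv (UGen.E j) * ι Kv (UGen.K i)))
  | KF (i j : I) : URel I a d (ι Kv (UGen.K i) * ι Kv (UGen.F j))
      (((vv ^ d i) ^ (-a i j)) • (ι Kv (UGen.F j) * ι Kv (UGen.K i)))
  | EF (i : I) : URel I a d
      ((vv ^ d i - (vv ^ d i)⁻¹) •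
        (ι Kv (UGen.E i) * ι Kv (UGen.F i) - ι Kv (UGen.F i) * ι Kv (UGen.E i)))
      (ι Kv (UGen.K i) - ι Kv (UGen.K' i))
  | EFcomm (i j : I) (h : i ≠ j) : URel I a d
      (ι Kv (UGen.E i) * ι Kv (UGen.F j)) (ι Kv (UGen.F j) * ι Kv (UGen.E i))
  | serreE (i j : I) (h : i ≠ j) : URel I a d
      (∑ t ∈ Finset.range ((1 - a i j).toNat + 1),
        ((-1 : Kv) ^ t * qbinom (vv ^ d i) (1 - a i j).toNat t) •
          (ι Kv (UGen.E i) ^ t * ι Kv (UGen.E j) *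
            ι Kv (UGen.E i) ^ ((1 - a i j).toNat - t))) 0
  | serreF (i j : I) (h : i ≠ j) : URel I a d
      (∑ t ∈ Finset.range ((1 - a i j).toNat + 1),
        ((-1 : Kv) ^ t * qbinom (vv ^ d i) (1 - a i j).toNat t) •
          (ι Kv (UGen.F i) ^ t * ι Kv (UGen.F j) *
            ι Kv (UGen.F i) ^ ((1 - a i j).toNat - t))) 0

/-- Defining relations of the algebra V associated to a symmetrizable generalized
Cartan matrix `a` with symmetrizers `d`. -/
inductive VRel (I : Type) (a : I → I → ℤ) (d : I → ℤ) :
    FreeAlgebra Kv (VGen I) → FreeAlgebra Kv (VGen I) → Prop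
  | KK' (i : I) : VRel I a d (ι Kv (VGen.K i) * ι Kv (VGen.K' i)) 1
  | K'K (i : I) : VRel I a d (ι Kv (VGen.K' i) * ι Kv (VGen.K i)) 1
  | KKcomm (i j : I) : VRel I a d (ι Kv (VGen.K i) * ι Kv (VGen.K j))
      (ι Kv (VGen.K j) * ι Kv (VGen.K i))
  | KE (i j : I) : VRel I a d (ι Kv (VGen.K i) * ι Kv (VGen.Ep j))
      (((vv ^ d i) ^ a i j) • (ι Kv (VGen.Ep j) * ι Kv (VGen.K i)))
  | KF (i j : I) : VRel I a d (ι Kv (VGen.K i) * ι Kv (VGen.Em j))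
      (((vv ^ d i) ^ (-a i j)) • (ι Kv (VGen.Em j) * ι Kv (VGen.K i)))
  | EF (i : I) : VRel I a d
      ((vv ^ d i - (vv ^ d i)⁻¹) •
        (ι Kv (VGen.Ep i) * ι Kv (VGen.Em i) - ι Kv (VGen.Em i) * ι Kv (VGen.Ep i)))
      (ι Kv (VGen.K i) - ι Kv (VGen.K' i))
  | serreE (i j : I) (h : i ≠ j) : VRel I a d
      (∑ t ∈ Finset.range ((1 - a i j).toNat + 1),
        ((-1 : Kv) ^ t * qbinom (vv ^ d i) (1 - a i j).toNat t) •
          (ι Kv (VGen.Ep i) ^ t * ι Kv (VGen.Ep j) *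
            ι Kv (VGen.Ep i) ^ ((1 - a i j).toNat - t))) 0
  | serreF (i j : I) (h : i ≠ j) : VRel I a d
      (∑ t ∈ Finset.range ((1 - a i j).toNat + 1),
        ((-1 : Kv) ^ t * qbinom (vv ^ d i) (1 - a i j).toNat t) •
          (ι Kv (VGen.Em i) ^ t * ι Kv (VGen.Em j) *
            ι Kv (VGen.Em i) ^ ((1 - a i j).toNat - t))) 0
  | mixedA (i : I) : VRel I a d
      (ι Kv (VGen.Ep i) ^ 3 * ι Kv (VGen.Em i)
        - ((vv ^ d i) ^ 2 + 1 + ((vv ^ d i)⁻¹) ^ 2) •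
            (ι Kv (VGen.Ep i) ^ 2 * ι Kv (VGen.Em i) * ι Kv (VGen.Ep i))
        + ((vv ^ d i) ^ 2 + 1 + ((vv ^ d i)⁻¹) ^ 2) •
            (ι Kv (VGen.Ep i) * ι Kv (VGen.Em i) * ι Kv (VGen.Ep i) ^ 2)
        - ι Kv (VGen.Em i) * ι Kv (VGen.Ep i) ^ 3) 0
  | mixedB (i : I) : VRel I a d
      (ι Kv (VGen.Em i) ^ 3 * ι Kv (VGen.Ep i)
        - ((vv ^ d i) ^ 2 + 1 + ((vv ^ d i)⁻¹) ^ 2) •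
            (ι Kv (VGen.Em i) ^ 2 * ι Kv (VGen.Ep i) * ι Kv (VGen.Em i))
        + ((vv ^ d i) ^ 2 + 1 + ((vv ^ d i)⁻¹) ^ 2) •
            (ι Kv (VGen.Em i) * ι Kv (VGen.Ep i) * ι Kv (VGen.Em i) ^ 2)
        - ι Kv (VGen.Ep i) * ι Kv (VGen.Em i) ^ 3) 0
  | mixedC (i j : I) (h : i ≠ j) : VRel I a d
      (ι Kv (VGen.Ep i) * ι Kv (VGen.Em j)) (ι Kv (VGen.Em j) * ι Kv (VGen.Ep i))

/-! ### Auxiliary material for the proof -/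

section Aux

lemma vv_ne_zero : (vv : Kv) ≠ 0 := RatFunc.X_ne_zero

lemma vv_zpow_ne_one {n : ℤ} (hn : 0 < n) : (vv : Kv) ^ n ≠ 1 := by
  intro h
  lift n to ℕ using hn.le with m
  rw [zpow_natCast] at h
  have h1 : (Polynomial.X : Polynomial ℚ) ^ m = 1 := by
    apply RatFunc.algebraMap_injective
    simpa [map_pow, RatFunc.algebraMap_X, vv] using h
  have := congrArg Polynomial.natDegree h1
  simp [Polynomial.natDegree_X_pow] at this
  omega

lemma vv_sub_inv_ne_zero {n : ℤ} (hn : 0 < n) :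
    (vv : Kv) ^ n - ((vv : Kv) ^ n)⁻¹ ≠ 0 := by
  intro h
  have hv : (vv : Kv) ^ n ≠ 0 := zpow_ne_zero _ vv_ne_zero
  have h2 : (vv : Kv) ^ n * (vv : Kv) ^ n = 1 := by
    have h3 := sub_eq_zero.mp h
    nth_rewrite 2 [h3]
    exact mul_inv_cancel₀ hv
  rw [← zpow_add₀ vv_ne_zero] at h2
  exact vv_zpow_ne_one (by omega) h2

lemma mixed_key {F A : Type*} [Field F] [Ring A] [Algebra F A] (V2 D : F)
    (hV2 : V2 ≠ 0) (hD : D ≠ 0) (e f k k' : A)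
    (hke : k * e = V2 • (e * k)) (hk'e : k' * e = V2⁻¹ • (e * k'))
    (hef : D • (e * f - f * e) = k - k') :
    e ^ 3 * f - (V2 + 1 + V2⁻¹) • (e ^ 2 * f * e) + (V2 + 1 + V2⁻¹) • (e * f * e ^ 2)
      - f * e ^ 3 = 0 := by
  set c := D⁻¹ with hc
  have hef0 : e * f - f * e = c • k - c • k' := by
    have h := congrArg (c • ·) hef
    simpa [smul_smul, hc, inv_mul_cancel₀ hD, smul_sub] using h
  have hef' : e * f = f * e + c • k - c • k' := by
    have := eq_add_of_sub_eq hef0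
    rw [this]; abel
  have hef'' : ∀ x : A, e * (f * x) = f * (e * x) + c • (k * x) - c • (k' * x) := fun x => by
    rw [← mul_assoc, hef', sub_mul, add_mul, smul_mul_assoc, smul_mul_assoc, mul_assoc]
  have hke' : ∀ x : A, k * (e * x) = V2 • (e * (k * x)) := fun x => by
    rw [← mul_assoc, hke, smul_mul_assoc, mul_assoc]
  have hk'e' : ∀ x : A, k' * (e * x) = V2⁻¹ • (e * (k' * x)) := fun x => by
    rw [← mul_assoc, hk'e, smul_mul_assoc, mul_assoc]
  simp only [pow_succ, pow_zero, one_mul, mul_assoc]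
  simp only [hef', hef'', hke, hke', hk'e, hk'e', mul_add, mul_sub, add_mul, sub_mul,
    mul_smul_comm, smul_mul_assoc, smul_add, smul_sub, smul_smul]
  match_scalars <;> (ring_nf; try field_simp; try ring)

lemma kprime_move {F A : Type*} [Field F] [Ring A] [Algebra F A] (V2 : F) (hV2 : V2 ≠ 0)
    (e k k' : A) (hkk' : k * k' = 1) (hk'k : k' * k = 1) (hke : k * e = V2 • (e * k)) :
    k' * e = V2⁻¹ • (e * k') := by
  have hek : e * k = V2⁻¹ • (k * e) := by
    rw [hke, smul_smul, inv_mul_cancel₀ hV2, one_smul]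
  calc k' * e = k' * (e * (k * k')) := by rw [hkk', mul_one]
    _ = k' * ((e * k) * k') := by rw [mul_assoc]
    _ = V2⁻¹ • (k' * ((k * e) * k')) := by rw [hek, smul_mul_assoc, mul_smul_comm]
    _ = V2⁻¹ • ((k' * k) * (e * k')) := by simp only [mul_assoc]
    _ = V2⁻¹ • (e * k') := by rw [hk'k, one_mul]

/-- Renaming of generators from U to V. -/
def uvGen {I : Type} : UGen I → VGen I
  | .E i => .Ep i
  | .F i => .Em i
  | .K i => .K i
  | .K' i => .K' i

/-- Renaming of generators from V to U. -/
def vuGen {I : Type} : VGen I → UGen I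
  | .Ep i => .E i
  | .Em i => .F i
  | .K i => .K i
  | .K' i => .K' i

end Aux

/-- For a symmetrizable generalized Cartan matrix C, there is a unique
ℚ(v)-algebra isomorphism φ : U(C) → V with φ(E_i) = E⁺_i, φ(F_i) = E⁻_i,
φ(K_i) = K_i and φ(K_{-i}) = K_{-i}. -/
theorem stmt2 (I : Type) [Fintype I] (a : I → I → ℤ) (d : I → ℤ)
    (hdiag : ∀ i, a i i = 2) (hoff : ∀ i j, i ≠ j → a i j ≤ 0)
    (hd : ∀ i, 0 < d i) (hsym : ∀ i j, d i * a i j = d j * a j i) :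
    ∃! φ : RingQuot (URel I a d) ≃ₐ[Kv] RingQuot (VRel I a d),
      (∀ i, φ (RingQuot.mkAlgHom Kv (URel I a d) (ι Kv (UGen.E i))) =
          RingQuot.mkAlgHom Kv (VRel I a d) (ι Kv (VGen.Ep i))) ∧
      (∀ i, φ (RingQuot.mkAlgHom Kv (URel I a d) (ι Kv (UGen.F i))) =
          RingQuot.mkAlgHom Kv (VRel I a d) (ι Kv (VGen.Em i))) ∧
      (∀ i, φ (RingQuot.mkAlgHom Kv (URel I a d) (ι Kv (UGen.K i))) =
          RingQuot.mkAlgHom Kv (VRel I a d) (ι Kv (VGen.K i))) ∧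
      (∀ i, φ (RingQuot.mkAlgHom Kv (URel I a d) (ι Kv (UGen.K' i))) =
          RingQuot.mkAlgHom Kv (VRel I a d) (ι Kv (VGen.K' i))) := by
  classical
  have hV2 : ∀ i : I, ((vv ^ d i : Kv) ^ 2) ≠ 0 :=
    fun i => pow_ne_zero _ (zpow_ne_zero _ vv_ne_zero)
  have hD : ∀ i : I, (vv ^ d i - (vv ^ d i)⁻¹ : Kv) ≠ 0 := fun i => vv_sub_inv_ne_zero (hd i)
  have hz2 : ∀ i : I, ((vv : Kv) ^ d i) ^ (a i i) = (vv ^ d i) ^ 2 := fun i => by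
    rw [hdiag i, zpow_two, sq]
  have hz2' : ∀ i : I, ((vv : Kv) ^ d i) ^ (-(a i i)) = ((vv ^ d i) ^ 2)⁻¹ := fun i => by
    rw [hdiag i, zpow_neg, zpow_two, sq]
  have hfU : ∀ ⦃x y⦄, URel I a d x y →
      (FreeAlgebra.lift Kv
        fun g => RingQuot.mkAlgHom Kv (VRel I a d) (ι Kv (uvGen g))) x =
      (FreeAlgebra.lift Kv
        fun g => RingQuot.mkAlgHom Kv (VRel I a d) (ι Kv (uvGen g))) y := by
    intro x y h
    induction h with
    | KK' i => simpa [uvGen] using RingQuot.mkAlgHom_rel Kv (VRel.KK' (a := a) (d := d) i)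
    | K'K i => simpa [uvGen] using RingQuot.mkAlgHom_rel Kv (VRel.K'K (a := a) (d := d) i)
    | KKcomm i j => simpa [uvGen] using RingQuot.mkAlgHom_rel Kv (VRel.KKcomm (a := a) (d := d) i j)
    | KE i j => simpa [uvGen] using RingQuot.mkAlgHom_rel Kv (VRel.KE (a := a) (d := d) i j)
    | KF i j => simpa [uvGen] using RingQuot.mkAlgHom_rel Kv (VRel.KF (a := a) (d := d) i j)
    | EF i => simpa [uvGen] using RingQuot.mkAlgHom_rel Kv (VRel.EF (a := a) (d := d) i)
    | EFcomm i j hij =>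
        simpa [uvGen] using RingQuot.mkAlgHom_rel Kv (VRel.mixedC (a := a) (d := d) i j hij)
    | serreE i j hij =>
        simpa [uvGen] using RingQuot.mkAlgHom_rel Kv (VRel.serreE (a := a) (d := d) i j hij)
    | serreF i j hij =>
        simpa [uvGen] using RingQuot.mkAlgHom_rel Kv (VRel.serreF (a := a) (d := d) i j hij)
  have hfV : ∀ ⦃x y⦄, VRel I a d x y →
      (FreeAlgebra.lift Kv
        fun g => RingQuot.mkAlgHom Kv (URel I a d) (ι Kv (vuGen g))) x =
      (FreeAlgebra.lift Kv
        fun g => RingQuot.mkAlgHom Kv (URel I a d) (ι Kv (vuGen g))) y := by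
    intro x y h
    induction h with
    | KK' i => simpa [vuGen] using RingQuot.mkAlgHom_rel Kv (URel.KK' (a := a) (d := d) i)
    | K'K i => simpa [vuGen] using RingQuot.mkAlgHom_rel Kv (URel.K'K (a := a) (d := d) i)
    | KKcomm i j => simpa [vuGen] using RingQuot.mkAlgHom_rel Kv (URel.KKcomm (a := a) (d := d) i j)
    | KE i j => simpa [vuGen] using RingQuot.mkAlgHom_rel Kv (URel.KE (a := a) (d := d) i j)
    | KF i j => simpa [vuGen] using RingQuot.mkAlgHom_rel Kv (URel.KF (a := a) (d := d) i j)
    | EF i => simpa [vuGen] using RingQuot.mkAlgHom_rel Kv (URel.EF (a := a) (d := d) i)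
    | serreE i j hij =>
        simpa [vuGen] using RingQuot.mkAlgHom_rel Kv (URel.serreE (a := a) (d := d) i j hij)
    | serreF i j hij =>
        simpa [vuGen] using RingQuot.mkAlgHom_rel Kv (URel.serreF (a := a) (d := d) i j hij)
    | mixedC i j hij =>
        simpa [vuGen] using RingQuot.mkAlgHom_rel Kv (URel.EFcomm (a := a) (d := d) i j hij)
    | mixedA i =>
        have hkk' := RingQuot.mkAlgHom_rel Kv (URel.KK' (a := a) (d := d) i)
        have hk'k := RingQuot.mkAlgHom_rel Kv (URel.K'K (a := a) (d := d) i)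
        have hke := RingQuot.mkAlgHom_rel Kv (URel.KE (a := a) (d := d) i i)
        have hef := RingQuot.mkAlgHom_rel Kv (URel.EF (a := a) (d := d) i)
        simp only [map_mul, map_one, map_smul, map_sub] at hkk' hk'k hke hef
        rw [hz2 i] at hke
        have hk'e := kprime_move _ (hV2 i) _ _ _ hkk' hk'k hke
        simp only [map_sub, map_add, map_smul, map_mul, map_pow, map_zero,
          FreeAlgebra.lift_ι_apply, vuGen]
        rw [inv_pow]
        exact mixed_key _ _ (hV2 i) (hD i) _ _ _ _ hke hk'e hef
    | mixedB i =>
        have hkk' := RingQuot.mkAlgHom_rel Kv (URel.KK' (a := a) (d := d) i)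
        have hk'k := RingQuot.mkAlgHom_rel Kv (URel.K'K (a := a) (d := d) i)
        have hkf := RingQuot.mkAlgHom_rel Kv (URel.KF (a := a) (d := d) i i)
        have hef := RingQuot.mkAlgHom_rel Kv (URel.EF (a := a) (d := d) i)
        simp only [map_mul, map_one, map_smul, map_sub] at hkk' hk'k hkf hef
        rw [hz2' i] at hkf
        have hk'f := kprime_move _ (inv_ne_zero (hV2 i)) _ _ _ hkk' hk'k hkf
        rw [inv_inv] at hk'f
        have hfe : (vv ^ d i - (vv ^ d i)⁻¹ : Kv) •
            (RingQuot.mkAlgHom Kv (URel I a d) (ι Kv (UGen.F i)) *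
              RingQuot.mkAlgHom Kv (URel I a d) (ι Kv (UGen.E i)) -
             RingQuot.mkAlgHom Kv (URel I a d) (ι Kv (UGen.E i)) *
              RingQuot.mkAlgHom Kv (URel I a d) (ι Kv (UGen.F i))) =
            RingQuot.mkAlgHom Kv (URel I a d) (ι Kv (UGen.K' i)) -
              RingQuot.mkAlgHom Kv (URel I a d) (ι Kv (UGen.K i)) := by
          rw [← neg_sub (RingQuot.mkAlgHom Kv (URel I a d) (ι Kv (UGen.E i)) *
              RingQuot.mkAlgHom Kv (URel I a d) (ι Kv (UGen.F i))), smul_neg, hef, neg_sub]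
        simp only [map_sub, map_add, map_smul, map_mul, map_pow, map_zero,
          FreeAlgebra.lift_ι_apply, vuGen]
        rw [inv_pow]
        exact mixed_key _ _ (hV2 i) (hD i) _ _ _ _ hk'f hkf hfe
  have h1 : (RingQuot.liftAlgHom Kv ⟨_, hfU⟩).comp (RingQuot.liftAlgHom Kv ⟨_, hfV⟩) =
      AlgHom.id Kv (RingQuot (VRel I a d)) := by
    apply RingQuot.ringQuot_ext'
    apply FreeAlgebra.hom_ext
    funext g
    cases g <;>
      simp [Function.comp, RingQuot.liftAlgHom_mkAlgHom_apply, FreeAlgebra.lift_ι_apply,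
        uvGen, vuGen]
  have h2 : (RingQuot.liftAlgHom Kv ⟨_, hfV⟩).comp (RingQuot.liftAlgHom Kv ⟨_, hfU⟩) =
      AlgHom.id Kv (RingQuot (URel I a d)) := by
    apply RingQuot.ringQuot_ext'
    apply FreeAlgebra.hom_ext
    funext g
    cases g <;>
      simp [Function.comp, RingQuot.liftAlgHom_mkAlgHom_apply, FreeAlgebra.lift_ι_apply,
        uvGen, vuGen]
  refine ⟨AlgEquiv.ofAlgHom (RingQuot.liftAlgHom Kv ⟨_, hfU⟩)
      (RingQuot.liftAlgHom Kv ⟨_, hfV⟩) h1 h2, ⟨?_, ?_, ?_, ?_⟩, ?_⟩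
  · intro i
    simp [AlgEquiv.ofAlgHom, RingQuot.liftAlgHom_mkAlgHom_apply, FreeAlgebra.lift_ι_apply, uvGen]
  · intro i
    simp [AlgEquiv.ofAlgHom, RingQuot.liftAlgHom_mkAlgHom_apply, FreeAlgebra.lift_ι_apply, uvGen]
  · intro i
    simp [AlgEquiv.ofAlgHom, RingQuot.liftAlgHom_mkAlgHom_apply, FreeAlgebra.lift_ι_apply, uvGen]
  · intro i
    simp [AlgEquiv.ofAlgHom, RingQuot.liftAlgHom_mkAlgHom_apply, FreeAlgebra.lift_ι_apply, uvGen]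
  · rintro ψ ⟨hE, hF, hK, hK'⟩
    apply AlgEquiv.coe_algHom_injective
    apply RingQuot.ringQuot_ext'
    apply FreeAlgebra.hom_ext
    funext g
    cases g <;>
      simp [Function.comp, hE, hF, hK, hK', AlgEquiv.ofAlgHom,
        RingQuot.liftAlgHom_mkAlgHom_apply, FreeAlgebra.lift_ι_apply, uvGen]
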